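/- arXiv:0903.4866 — 4 statements merged into one kernel-verified Lean document; each statement's English description precedes it below -/
import Mathlib

section
/- Let t ≥ 2, Q, M > 0 be integers, i ≥ 1, and set r = sqrt(⌈Q/M⌉ · ln(M·t·2^i)/2). Then the number of strings in T^Q that are (M,r)-unbalanced is strictly less than t^Q · 2^{-i}. -/
/-- The section (of `M` contiguous sections of `{0,…,Q-1}`, the first `Q mod M` of
length `⌈Q/M⌉` and the rest of length `⌊Q/M⌋`) containing position `p`. -/
def sectionOf (Q M p : ℕ) : ℕ :=
  if p < (Q % M) * (Q / M + 1) then p / (Q / M + 1)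
  else Q % M + (p - (Q % M) * (Q / M + 1)) / (Q / M)

/-- `w` is `(M,r)`-balanced: each letter of `T` appears in each of the `M` sections
at most `(1/t)⌈Q/M⌉ + r` times. Note `(Q + M - 1)/M = ⌈Q/M⌉` for `M > 0`. -/
def IsBalanced (t Q M : ℕ) (r : ℝ) (w : Fin Q → Fin t) : Prop :=
  ∀ m < M, ∀ a : Fin t,
    (Set.ncard {p : Fin Q | sectionOf Q M p = m ∧ w p = a} : ℝ)
      ≤ (((Q + M - 1) / M : ℕ) : ℝ) / t + r

/-!
For a section `S` of length at most `D = ⌈Q/M⌉` and a letter `a`, the number of occurrences of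
`a` in `S` in a uniformly random string is a sum of `#S` independent indicators of mean `1/t`, so
by Hoeffding's inequality it exceeds `D/t + r` with probability less than
`exp (-2 r² / D) = 1 / (M t 2^i)`; the inequality is strict because counts are integers. A union
bound over the `M` sections and the `t` letters finishes the proof.
-/

open Finset MeasureTheory ProbabilityTheory Real

lemma card_filter_sub_div_eq_le (s : Finset ℕ) {c d : ℕ} (hd : 0 < d) (j : ℕ) :
    #{x ∈ s | c ≤ x ∧ (x - c) / d = j} ≤ d := by
  refine (card_le_card_of_injOn (fun x => (x - c) % d) (fun x _ => ?_) ?_).trans_eq (card_range d)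
  · simpa using Nat.mod_lt _ hd
  · intro x hx y hy (hxy : (x - c) % d = (y - c) % d)
    simp only [coe_filter, Set.mem_ofPred_eq] at hx hy
    have hx' := Nat.div_add_mod (x - c) d
    have hy' := Nat.div_add_mod (y - c) d
    rw [hx.2.2] at hx'
    rw [hy.2.2] at hy'
    omega

def sectionFinset (Q M m : ℕ) : Finset (Fin Q) := {p | sectionOf Q M p = m}

lemma card_sectionFinset_le (Q M m : ℕ) (hM : 0 < M) :
    #(sectionFinset Q M m) ≤ (Q + M - 1) / M := by
  obtain ⟨k, hk⟩ : ∃ k, Q / M = k := ⟨_, rfl⟩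
  obtain ⟨q, hq⟩ : ∃ q, Q % M = q := ⟨_, rfl⟩
  have hQ : M * k + q = Q := hk ▸ hq ▸ Nat.div_add_mod Q M
  have hqM : q < M := hq ▸ Nat.mod_lt Q hM
  have hsectionOf (p : ℕ) : sectionOf Q M p =
      if p < q * (k + 1) then p / (k + 1) else q + (p - q * (k + 1)) / k := by
    rw [sectionOf, hk, hq]
  have hcard_le (c d j : ℕ) (hd : 0 < d)
      (h : ∀ p : Fin Q, sectionOf Q M p = m → c ≤ p.val ∧ (p.val - c) / d = j) :
      #(sectionFinset Q M m) ≤ d :=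
    calc #(sectionFinset Q M m) ≤ #{x ∈ range Q | c ≤ x ∧ (x - c) / d = j} :=
          card_le_card_of_injOn Fin.val (fun p hp => by simp_all [sectionFinset])
            Fin.val_injective.injOn
      _ ≤ d := card_filter_sub_div_eq_le _ hd j
  rcases lt_or_ge m q with hm | hm
  · calc #(sectionFinset Q M m) ≤ k + 1 := by
          refine hcard_le 0 (k + 1) m k.succ_pos fun p hp => ?_
          rw [hsectionOf] at hp
          split_ifs at hp
          · simp [hp]
          · exact absurd ((Nat.le_add_right _ _).trans_eq hp) hm.not_ge
      _ ≤ (Q + M - 1) / M := by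
          rw [Nat.le_div_iff_mul_le hM, add_mul, one_mul, mul_comm]
          omega
  · have hlater (p : Fin Q) (hp : sectionOf Q M p = m) :
        q * (k + 1) ≤ p.val ∧ (p.val - q * (k + 1)) / k = m - q := by
      rw [hsectionOf] at hp
      split_ifs at hp with hp'
      · have : p.val / (k + 1) < q := (Nat.div_lt_iff_lt_mul k.succ_pos).2 hp'
        omega
      · omega
    rcases Nat.eq_zero_or_pos k with hk0 | hk0
    · refine (card_eq_zero.2 (filter_eq_empty_iff.2 fun p _ hp => ?_)).trans_le (Nat.zero_le _)
      have := hlater p hp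
      have := p.isLt
      simp only [hk0] at *
      omega
    · calc #(sectionFinset Q M m) ≤ k := hcard_le _ k _ hk0 hlater
        _ ≤ (Q + M - 1) / M := hk ▸ Nat.div_le_div_right (by omega)

def letterCount {ι α : Type*} [DecidableEq α] (S : Finset ι) (a : α) (w : ι → α) : ℕ :=
  #{p ∈ S | w p = a}

section

variable {ι α : Type*} [Fintype ι] [DecidableEq α] [Fintype α]

lemma hasSubgaussianMGF_indicator_sub [MeasurableSpace α] [DiscreteMeasurableSpace α]
    (a : α) (p : ι) :
    HasSubgaussianMGF
      (fun w : ι → α => (if w p = a then 1 else 0) - (Fintype.card α : ℝ)⁻¹) (1 / 4)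
      (uniformOn Set.univ) := by
  have : Nonempty α := ⟨a⟩
  set t : ℝ := (Fintype.card α : ℝ)
  have h := hasSubgaussianMGF_of_mem_Icc_of_integral_eq_zero (a := -t⁻¹) (b := 1 - t⁻¹)
    (μ := uniformOn Set.univ) (X := fun w : ι → α => (if w p = a then 1 else 0) - t⁻¹)
    (measurable_of_countable _).aemeasurable
    (ae_of_all _ fun w => by split_ifs <;> constructor <;> linarith) ?_
  · rw [sub_neg_eq_add, sub_add_cancel] at h
    convert h using 1
    ext; norm_num
  · rw [← Set.pi_univ, uniformOn_pi, integral_comp_eval (X := fun _ => α) (i := p)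
      (f := fun x => (if x = a then 1 else 0) - t⁻¹)
      (measurable_of_countable _).aestronglyMeasurable, integral_fintype .of_finite]
    simp [uniformOn_univ, Measure.real, ← Finset.mul_sum, Finset.sum_sub_distrib, t]

variable [DecidableEq ι]

lemma card_letterCount_ge_le (S : Finset ι) (a : α) {ε : ℝ} (hε : 0 ≤ ε) :
    (#{w : ι → α | (#S : ℝ) / Fintype.card α + ε ≤ letterCount S a w} : ℝ)
      ≤ Fintype.card α ^ Fintype.card ι * exp (-2 * ε ^ 2 / #S) := by
  let _ : MeasurableSpace α := ⊤
  have : Nonempty α := ⟨a⟩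
  set t : ℝ := (Fintype.card α : ℝ)
  set μ : Measure (ι → α) := uniformOn Set.univ
  set X : ι → (ι → α) → ℝ := fun p w => (if w p = a then 1 else 0) - t⁻¹
  have hindep : iIndepFun X μ := by
    rw [show μ = Measure.pi fun _ => uniformOn Set.univ by rw [← uniformOn_pi, Set.pi_univ]]
    exact iIndepFun_pi fun _ =>
      (measurable_of_countable fun x : α => (if x = a then 1 else 0) - t⁻¹).aemeasurable
  have hsum (w : ι → α) : ∑ p ∈ S, X p w = letterCount S a w - #S / t := by
    simp [X, letterCount, Finset.sum_sub_distrib, Finset.sum_boole, div_eq_mul_inv]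
  have hμ (A : Finset (ι → α)) : μ.real A = #A / t ^ Fintype.card ι := by
    simp [μ, Measure.real, uniformOn_univ, Measure.count_apply_finset, t]
  have hset : {w | ε ≤ ∑ p ∈ S, X p w}
      = ↑({w | #S / t + ε ≤ letterCount S a w} : Finset (ι → α)) := by
    ext w
    simp only [hsum, Set.mem_ofPred_eq, coe_filter, mem_univ, true_and]
    constructor <;> intro <;> linarith
  have hexp :
      -ε ^ 2 / (2 * ((∑ _p ∈ S, (1 / 4 : NNReal) : NNReal) : ℝ)) = -2 * ε ^ 2 / #S := by
    push_cast
    rw [Finset.sum_const, nsmul_eq_mul]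
    ring
  have := HasSubgaussianMGF.measure_sum_ge_le_of_iIndepFun hindep (s := S)
    (fun p _ => hasSubgaussianMGF_indicator_sub a p) hε
  rwa [hset, hμ, hexp, div_le_iff₀ (by positivity), mul_comm] at this

lemma card_letterCount_gt_lt (S : Finset ι) (a : α) {D : ℕ} (hSD : #S ≤ D) {r : ℝ}
    (hr : 0 ≤ r) :
    (#{w : ι → α | (D : ℝ) / Fintype.card α + r < letterCount S a w} : ℝ)
      < Fintype.card α ^ Fintype.card ι * exp (-2 * r ^ 2 / D) := by
  have : Nonempty α := ⟨a⟩
  set t : ℝ := (Fintype.card α : ℝ)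
  set θ : ℝ := D / t + r
  have hθ : 0 ≤ θ := by positivity
  rcases S.eq_empty_or_nonempty with rfl | hS
  · have hempty : ({w : ι → α | θ < letterCount ∅ a w} : Finset (ι → α)) = ∅ :=
      filter_eq_empty_iff.2 fun w _ => by simpa [letterCount] using hθ
    rw [hempty, card_empty, Nat.cast_zero]
    positivity
  -- A count above `θ` is at least `⌊θ⌋₊ + 1`: this margin makes the final bound strict.
  set ε : ℝ := (⌊θ⌋₊ + 1 : ℕ) - #S / t
  have hrε : r < ε := by
    have : (#S : ℝ) / t ≤ D / t := by gcongr
    push_cast [ε]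
    linarith [Nat.lt_floor_add_one θ, show θ = D / t + r from rfl]
  have hsubset : ({w | θ < letterCount S a w} : Finset (ι → α))
      ⊆ ({w | (#S : ℝ) / t + ε ≤ letterCount S a w} : Finset (ι → α)) := by
    intro w
    simp only [mem_filter, mem_univ, true_and, ε, add_sub_cancel]
    exact fun hw => by exact_mod_cast (Nat.floor_lt hθ).2 hw
  have hS : (0 : ℝ) < #S := by exact_mod_cast hS.card_pos
  calc (#{w : ι → α | θ < letterCount S a w} : ℝ)
      ≤ #{w : ι → α | (#S : ℝ) / t + ε ≤ letterCount S a w} := by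
        exact_mod_cast card_le_card hsubset
    _ ≤ t ^ Fintype.card ι * exp (-2 * ε ^ 2 / #S) :=
        card_letterCount_ge_le S a (hr.trans hrε.le)
    _ < t ^ Fintype.card ι * exp (-2 * r ^ 2 / #S) := by
        gcongr _ * exp ?_
        rw [div_lt_div_iff_of_pos_right hS]
        nlinarith
    _ ≤ t ^ Fintype.card ι * exp (-2 * r ^ 2 / D) := by
        gcongr _ * exp ?_
        rw [neg_mul, neg_div, neg_div, neg_le_neg_iff]
        exact div_le_div_of_nonneg_left (by positivity) hS (by exact_mod_cast hSD)

end

lemma ncard_not_isBalanced_le (t Q M : ℕ) (r : ℝ) :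
    (Set.ncard {w : Fin Q → Fin t | ¬ IsBalanced t Q M r w} : ℝ)
      ≤ ∑ m ∈ range M, ∑ a : Fin t, (#{w : Fin Q → Fin t | (((Q + M - 1) / M : ℕ) : ℝ) / t + r
          < letterCount (sectionFinset Q M m) a w} : ℝ) := by
  classical
  set bad : ℕ → Fin t → Finset (Fin Q → Fin t) := fun m a =>
    {w | (((Q + M - 1) / M : ℕ) : ℝ) / t + r < letterCount (sectionFinset Q M m) a w}
  have hsubset : ({w | ¬ IsBalanced t Q M r w} : Finset (Fin Q → Fin t))
      ⊆ (range M).biUnion fun m => univ.biUnion (bad m) := by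
    intro w hw
    simp only [mem_filter, mem_univ, true_and, IsBalanced, Set.ncard_eq_toFinset_card',
      Set.toFinset_ofPred, not_forall, not_le] at hw
    obtain ⟨m, hm, a, hma⟩ := hw
    simp only [mem_biUnion, mem_range, mem_univ, true_and]
    refine ⟨m, hm, a, ?_⟩
    simpa [bad, letterCount, sectionFinset, filter_filter] using hma
  rw [Set.ncard_eq_toFinset_card', Set.toFinset_ofPred]
  calc (#{w | ¬ IsBalanced t Q M r w} : ℝ)
      ≤ #((range M).biUnion fun m => univ.biUnion (bad m)) := by
        exact_mod_cast card_le_card hsubset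
    _ ≤ ∑ m ∈ range M, (#(univ.biUnion (bad m)) : ℝ) := by exact_mod_cast card_biUnion_le
    _ ≤ ∑ m ∈ range M, ∑ a, (#(bad m a) : ℝ) := by
        gcongr
        exact_mod_cast card_biUnion_le

theorem unbalanced_count_general (t Q M i : ℕ) (ht : 2 ≤ t) (hQ : 0 < Q) (hM : 0 < M) :
    (Set.ncard {w : Fin Q → Fin t | ¬ IsBalanced t Q M
        (Real.sqrt ((((Q + M - 1) / M : ℕ) : ℝ) * Real.log (M * t * 2 ^ i) / 2)) w} : ℝ)
      < (t : ℝ) ^ Q / 2 ^ i := by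
  set D := (Q + M - 1) / M
  set N : ℝ := M * t * 2 ^ i
  set r := √(D * log N / 2)
  have hD : 0 < D := Nat.div_pos (by omega) hM
  have hN : 1 ≤ N := one_le_mul_of_one_le_of_one_le
    (one_le_mul_of_one_le_of_one_le (by exact_mod_cast hM) (by exact_mod_cast (by omega : 1 ≤ t)))
    (one_le_pow₀ one_le_two)
  have hexp : exp (-2 * r ^ 2 / D) = N⁻¹ := by
    rw [sq_sqrt (by have := log_nonneg hN; positivity),
      show -2 * (D * log N / 2) / D = -log N by field_simp, exp_neg, exp_log (by linarith)]
  have hbad (m : ℕ) (a : Fin t) : (#{w : Fin Q → Fin t |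
      (D : ℝ) / t + r < letterCount (sectionFinset Q M m) a w} : ℝ) < t ^ Q / N := by
    have := card_letterCount_gt_lt _ a (card_sectionFinset_le Q M m hM) (r := r)
      (sqrt_nonneg _)
    rwa [hexp, ← div_eq_mul_inv, Fintype.card_fin, Fintype.card_fin] at this
  calc _ ≤ _ := ncard_not_isBalanced_le t Q M r
    _ < ∑ m ∈ range M, ∑ a : Fin t, (t : ℝ) ^ Q / N := by
        gcongr with m _ a
        · exact nonempty_range_iff.2 hM.ne'
        · exact univ_nonempty_iff.2 ⟨(⟨0, by omega⟩ : Fin t)⟩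
        · exact hbad m a
    _ = (t : ℝ) ^ Q / 2 ^ i := by
        simp only [sum_const, card_range, card_univ, Fintype.card_fin, nsmul_eq_mul, N]
        field_simp

/-- with `r = sqrt(⌈Q/M⌉ ln(M t 2^i)/2)`, fewer than `t^Q 2^{-i}`
strings of `T^Q` are `(M,r)`-unbalanced. -/
theorem unbalanced_count (t Q M i : ℕ) (ht : 2 ≤ t) (hQ : 0 < Q) (hM : 0 < M)
    (hi : 1 ≤ i) :
    (Set.ncard {w : Fin Q → Fin t | ¬ IsBalanced t Q M
        (Real.sqrt ((((Q + M - 1) / M : ℕ) : ℝ) * Real.log (M * t * 2 ^ i) / 2)) w} : ℝ)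
      < (t : ℝ) ^ Q / 2 ^ i :=
  unbalanced_count_general t Q M i ht hQ hM
end

section
/- Let t ≥ 2 be a prime power and Q ≥ 1, R ≥ 0 integers. Then A_t(Q, 2R+1) ≥ t^{Q - ⌈log_t(1 + ∑_{i=0}^{2R-1} C(Q-1,i)(t-1)^i)⌉}. -/
/-!
Over the field `F` with `t` elements, choose vectors `c₁, …, c_Q ∈ F^K` one at a time, each
outside the set of linear combinations of fewer than `2R` of the earlier ones. That set has at
most `∑_{i<2R} C(Q-1,i) (t-1)^i` elements, so the choice is possible as soon as this is `< t^K`.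
Then any `2R` of the `cᵢ` are linearly independent, i.e. the kernel of `x ↦ ∑ xᵢ cᵢ` is a linear
code of minimum distance at least `2R+1`; by rank–nullity it has at least `t^(Q-K)` words, and
`K = ⌈log_t (1 + ∑_{i<2R} C(Q-1,i) (t-1)^i)⌉` is the least admissible dimension.
-/

/-- `A t Q d`: the maximum number of codewords in a code of length `Q` over an
alphabet of size `t` with minimum Hamming distance `d`. -/
noncomputable def maxCode (t Q d : ℕ) : ℕ :=
  sSup {n : ℕ | ∃ s : Finset (Fin Q → Fin t),
    (∀ x ∈ s, ∀ y ∈ s, x ≠ y → d ≤ hammingDist x y) ∧ s.card = n}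

open Finset

section Counting

variable {ι β : Type*} [Fintype ι] [DecidableEq ι] [Fintype β] [DecidableEq β] [Zero β]

theorem card_filter_support_eq (s : Finset ι) :
    #{y : ι → β | ({i | y i ≠ 0} : Finset ι) = s} = (Fintype.card β - 1) ^ #s := by
  have : ({y : ι → β | ({i | y i ≠ 0} : Finset ι) = s} : Finset _) =
      Fintype.piFinset fun i => if i ∈ s then {0}ᶜ else {0} := by
    ext y
    simp only [mem_filter, mem_univ, true_and, Fintype.mem_piFinset, Finset.ext_iff]
    refine forall_congr' fun i => ?_
    split_ifs <;> simp [*]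
  rw [this, Fintype.card_piFinset, prod_apply_ite, prod_const, prod_const]
  simp [card_compl]

theorem card_filter_hammingNorm_eq (i : ℕ) :
    #{y : ι → β | hammingNorm y = i} = (Fintype.card ι).choose i * (Fintype.card β - 1) ^ i := by
  rw [card_eq_sum_card_fiberwise (f := fun y : ι → β => ({i | y i ≠ 0} : Finset ι))
    (t := powersetCard i univ) (fun y hy => by simpa [hammingNorm] using hy)]
  have hfiber (s) (hs : s ∈ powersetCard i univ) :
      filter (fun y : ι → β => ({i | y i ≠ 0} : Finset ι) = s) {y : ι → β | hammingNorm y = i} =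
        ({y : ι → β | ({i | y i ≠ 0} : Finset ι) = s} : Finset _) := by
    ext y
    simp only [mem_filter, mem_univ, true_and, and_iff_right_iff_imp]
    intro hy
    rw [hammingNorm, hy, (mem_powersetCard.1 hs).2]
  rw [sum_congr rfl fun s hs => by rw [hfiber s hs, card_filter_support_eq, (mem_powersetCard.1 hs).2],
    sum_const, card_powersetCard, card_univ, smul_eq_mul]

theorem card_filter_hammingNorm_lt (d : ℕ) :
    #{y : ι → β | hammingNorm y < d} =
      ∑ i ∈ range d, (Fintype.card ι).choose i * (Fintype.card β - 1) ^ i := by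
  rw [card_eq_sum_card_fiberwise (f := hammingNorm) (t := range d) (fun y hy => by simpa using hy)]
  refine sum_congr rfl fun i hi => ?_
  rw [← card_filter_hammingNorm_eq, filter_filter]
  exact congrArg card <| filter_congr fun y _ => ⟨And.right, fun h => ⟨h ▸ mem_range.1 hi, h⟩⟩

end Counting

section ParityCheck

variable {F V ι : Type*} [Field F] [AddCommGroup V] [Module F V] [Fintype ι]

theorem Fintype.linearCombination_cons {m : ℕ} (v : V) (c : Fin m → V) (x : Fin (m + 1) → F) :
    Fintype.linearCombination F (Fin.cons v c) x =
      x 0 • v + Fintype.linearCombination F c (Fin.tail x) := by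
  simp [Fintype.linearCombination_apply, Fin.sum_univ_succ, Fin.tail]

variable [DecidableEq F]

-- any `d` of the vectors `c i` are linearly independent
variable (F) in
def LinearIndepUpTo (d : ℕ) (c : ι → V) : Prop :=
  ∀ x : ι → F, hammingNorm x ≤ d → Fintype.linearCombination F c x = 0 → x = 0

theorem LinearIndepUpTo.pairwise_le_hammingDist {d : ℕ} {c : ι → V}
    (hc : LinearIndepUpTo F d c) :
    (LinearMap.ker (Fintype.linearCombination F c) : Set (ι → F)).Pairwise
      fun x y => d + 1 ≤ hammingDist x y := by
  intro x hx y hy hxy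
  by_contra! hlt
  rw [hammingDist_eq_hammingNorm] at hlt
  have := hc _ (by omega) (add_mem (neg_mem hx) hy)
  exact hxy (neg_add_eq_zero.1 this)

variable [Fintype F] [Fintype V] [DecidableEq V] {d : ℕ}

theorem LinearIndepUpTo.exists_cons {m : ℕ} {c : Fin m → V} (hc : LinearIndepUpTo F d c)
    (hcard : ∑ i ∈ range d, m.choose i * (Fintype.card F - 1) ^ i < Fintype.card V) :
    ∃ v, LinearIndepUpTo F d (Fin.cons v c : Fin (m + 1) → V) := by
  set B := image (Fintype.linearCombination F c) {y : Fin m → F | hammingNorm y < d}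
  have hB : #B < #(univ : Finset V) := card_image_le.trans_lt <| by
    rwa [card_filter_hammingNorm_lt, Fintype.card_fin, card_univ]
  obtain ⟨v, -, hv⟩ := exists_mem_notMem_of_card_lt_card hB
  refine ⟨v, fun x hx hx0 => ?_⟩
  rw [Fintype.linearCombination_cons] at hx0
  have hnorm : hammingNorm x = (if x 0 ≠ 0 then 1 else 0) + hammingNorm (Fin.tail x) :=
    Fin.card_filter_univ_succ' _
  by_cases h0 : x 0 = 0
  · rw [if_neg (not_not.2 h0), zero_add] at hnorm
    rw [h0, zero_smul, zero_add] at hx0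
    have htail : Fin.tail x = 0 := hc _ (hnorm ▸ hx) hx0
    ext i
    exact Fin.cases h0 (fun j => congrFun htail j) i
  · rw [if_pos h0] at hnorm
    refine absurd (mem_image.2 ⟨-(x 0)⁻¹ • Fin.tail x, ?_, ?_⟩) hv
    · simp only [mem_filter, mem_univ, true_and]
      exact hammingNorm_smul_le_hammingNorm.trans_lt (by omega)
    · rw [map_smul, eq_neg_of_add_eq_zero_right hx0, smul_neg,
        neg_smul, neg_neg, smul_smul, inv_mul_cancel₀ h0, one_smul]

theorem exists_linearIndepUpTo {n : ℕ}
    (hcard : ∑ i ∈ range d, (n - 1).choose i * (Fintype.card F - 1) ^ i < Fintype.card V) :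
    ∃ c : Fin n → V, LinearIndepUpTo F d c := by
  suffices ∀ m ≤ n, ∃ c : Fin m → V, LinearIndepUpTo F d c from this n le_rfl
  intro m hm
  induction m with
  | zero => exact ⟨Fin.elim0, fun x _ _ => Subsingleton.elim x 0⟩
  | succ m ih =>
    obtain ⟨c, hc⟩ := ih (by omega)
    obtain ⟨v, hv⟩ := hc.exists_cons <| hcard.trans_le' <| sum_le_sum fun i _ =>
      Nat.mul_le_mul_right _ (Nat.choose_le_choose i (by omega))
    exact ⟨_, hv⟩

end ParityCheck

theorem LinearMap.card_pow_sub_finrank_le_card_ker {F ι V : Type*} [Field F] [Fintype F] [Fintype ι]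
    [AddCommGroup V] [Module F V] [FiniteDimensional F V] (f : (ι → F) →ₗ[F] V) :
    Fintype.card F ^ (Fintype.card ι - Module.finrank F V) ≤ Nat.card (LinearMap.ker f) := by
  rw [Module.natCard_eq_pow_finrank (K := F), Nat.card_eq_fintype_card]
  have hrank := LinearMap.finrank_range_add_finrank_ker f
  rw [Module.finrank_fintype_fun_eq_card] at hrank
  have := Submodule.finrank_le (LinearMap.range f)
  exact Nat.pow_le_pow_right Fintype.card_pos (by omega)

theorem card_le_maxCode {α : Type*} [Fintype α] [DecidableEq α] {Q d : ℕ} (C : Set (Fin Q → α))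
    (hC : C.Pairwise fun x y => d ≤ hammingDist x y) :
    Nat.card C ≤ maxCode (Fintype.card α) Q d := by
  classical
  let e := Fintype.equivFin α
  let E : (Fin Q → α) ↪ (Fin Q → Fin (Fintype.card α)) :=
    ⟨fun x => e ∘ x, fun x y h => funext fun i => e.injective (congrFun h i)⟩
  refine le_csSup ⟨Fintype.card α ^ Q, ?_⟩ ⟨C.toFinset.map E, ?_, ?_⟩
  · rintro _ ⟨s, -, rfl⟩
    exact (card_le_univ s).trans (by simp)
  · simp only [mem_map, Set.mem_toFinset]
    rintro _ ⟨x, hx, rfl⟩ _ ⟨y, hy, rfl⟩ hxy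
    rw [show hammingDist (E x) (E y) = hammingDist x y from
      hammingDist_comp (fun _ => e) fun _ => e.injective]
    exact hC hx hy (ne_of_apply_ne _ hxy)
  · rw [card_map, Set.toFinset_card, Nat.card_eq_fintype_card]

theorem pow_le_maxCode (F : Type*) [Field F] [Fintype F] {Q d K : ℕ}
    (h : ∑ i ∈ range d, (Q - 1).choose i * (Fintype.card F - 1) ^ i < Fintype.card F ^ K) :
    Fintype.card F ^ (Q - K) ≤ maxCode (Fintype.card F) Q (d + 1) := by
  classical
  obtain ⟨c, hc⟩ := exists_linearIndepUpTo (V := Fin K → F) (n := Q) (by simpa using h)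
  calc Fintype.card F ^ (Q - K)
      = Fintype.card F ^ (Fintype.card (Fin Q) - Module.finrank F (Fin K → F)) := by simp
    _ ≤ Nat.card (LinearMap.ker (Fintype.linearCombination F c)) :=
      LinearMap.card_pow_sub_finrank_le_card_ker _
    _ ≤ maxCode (Fintype.card F) Q (d + 1) := card_le_maxCode _ hc.pairwise_le_hammingDist

theorem varshamov_general (t Q R : ℕ) (ht : IsPrimePow t) :
    t ^ (Q - Nat.clog t
        (1 + ∑ i ∈ Finset.range (2 * R), Nat.choose (Q - 1) i * (t - 1) ^ i))
      ≤ maxCode t Q (2 * R + 1) := by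
  obtain ⟨p, m, hp, hm, rfl⟩ := ht
  have : Fact p.Prime := ⟨hp.nat_prime⟩
  let : Fintype (GaloisField p m) := Fintype.ofFinite _
  have hcard : Fintype.card (GaloisField p m) = p ^ m := by
    rw [← Nat.card_eq_fintype_card, GaloisField.card p m hm.ne']
  rw [← hcard]
  exact pow_le_maxCode _ <|
    (Nat.lt_one_add_iff.2 le_rfl).trans_le (Nat.le_pow_clog Fintype.one_lt_card _)

/-- Varshamov bound: for `t` a prime power,
`A_t(Q,2R+1) ≥ t^{Q - ⌈log_t(1 + ∑_{i=0}^{2R-1} C(Q-1,i)(t-1)^i)⌉}`.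
`Nat.clog` is the ceiling logarithm. -/
theorem varshamov (t Q R : ℕ) (ht : IsPrimePow t) (hQ : 1 ≤ Q) :
    t ^ (Q - Nat.clog t
        (1 + ∑ i ∈ Finset.range (2 * R), Nat.choose (Q - 1) i * (t - 1) ^ i))
      ≤ maxCode t Q (2 * R + 1) :=
  varshamov_general t Q R ht
end

section
/- Let t ≥ 2 and k ≥ R ≥ 0, and let c_k = (k²+3k-2)/2 and 0 < c₉ < 1 be constants. Then for all sufficiently large Q, A_t(Q - c_k, 2R+1) > c₉ · (2R-1)!/(2^{2R}(t-1)^{2R-1}) · t^{Q - c_k - 1}/Q^{2R-1}. -/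
/-!
Varshamov's construction over a prime field `𝔽_p` with `t < p < 2t` (Bertrand). Greedily
choose parity-check columns `v₁, …, vₙ ∈ 𝔽_p^m`, any `s + 1` of them linearly independent: a new
column only has to avoid the at most `V = ∑_{i ≤ s} C(n-1, i) (p-1)^i` combinations of `s` old
ones, so `p^m > V` suffices, and `m` can be taken with `p^m ≤ p V`. Every fibre of the syndrome
map `x ↦ ∑ xᵢ vᵢ` is then a code of minimum distance `s + 2`. Intersecting a code over `𝔽_p`
with a translate of the box `{0, …, t-1}ⁿ` gives a code over `t` letters, and averaging over all
translates and all fibres yields `tⁿ ≤ p^m A_t(n, s + 2) ≤ p V A_t(n, s + 2)`. Finally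
`s! V ≤ (nˢ + O(nˢ⁻¹)) (p-1)ˢ`, while `p ≤ 2t` and `p - 1 ≤ 2 (t - 1)` produce the factor
`2^(s+1) = 2^(2R)` for `s = 2R - 1`. For `R = 0` the whole space is a code of distance `1`.
-/

open Finset
open scoped Nat

lemma card_le_maxCode_s4 {t n d : ℕ} (C : Finset (Fin n → Fin t))
    (hC : ∀ x ∈ C, ∀ y ∈ C, x ≠ y → d ≤ hammingDist x y) :
    #C ≤ maxCode t n d :=
  le_csSup ⟨Fintype.card (Fin n → Fin t), by rintro _ ⟨u, -, rfl⟩; exact card_le_univ u⟩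
    ⟨C, hC, rfl⟩

lemma pow_le_maxCode_one (t n : ℕ) : t ^ n ≤ maxCode t n 1 := by
  simpa using card_le_maxCode_s4 (d := 1) univ fun x _ y _ hxy => hammingDist_pos.mpr hxy

lemma card_mul_pow_le_pow_mul_maxCode {G : Type*} [AddGroup G] [Fintype G] [DecidableEq G]
    {t n d : ℕ} (ht : t ≤ Fintype.card G) (C : Finset (Fin n → G))
    (hC : ∀ x ∈ C, ∀ y ∈ C, x ≠ y → d ≤ hammingDist x y) :
    #C * t ^ n ≤ Fintype.card G ^ n * maxCode t n d := by
  obtain ⟨e⟩ := Function.Embedding.nonempty_of_card_le (α := Fin t) (by simpa using ht)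
  let shift (g : Fin n → G) (y : Fin n → Fin t) : Fin n → G := fun i => g i + e (y i)
  have hdist (g) (y y') : hammingDist (shift g y) (shift g y') = hammingDist y y' :=
    hammingDist_comp (fun i a => g i + e a) fun i => (add_right_injective _).comp e.injective
  have hcode (g : Fin n → G) : #{y | shift g y ∈ C} ≤ maxCode t n d :=
    card_le_maxCode_s4 _ fun y hy y' hy' hne => by
      simp only [mem_filter, mem_univ, true_and] at hy hy'
      rw [← hdist g]
      refine hC _ hy _ hy' fun h => hne ?_
      rw [← hammingDist_eq_zero, ← hdist g, h, hammingDist_self]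
  have hshifts (y : Fin n → Fin t) : #{g | shift g y ∈ C} = #C := by
    rw [← card_map (Equiv.addRight fun i => e (y i)).toEmbedding]
    congr 1
    ext x
    simp [shift]
  calc #C * t ^ n = ∑ y : Fin n → Fin t, #{g | shift g y ∈ C} := by simp [hshifts, mul_comm]
    _ = ∑ g : Fin n → G, #{y | shift g y ∈ C} := by
      simp only [card_filter]; exact sum_comm
    _ ≤ Fintype.card G ^ n * maxCode t n d := (sum_le_sum fun g _ => hcode g).trans_eq (by simp)

def hammingVolume (q n r : ℕ) : ℕ :=
  ∑ i ∈ range (r + 1), n.choose i * (q - 1) ^ i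

lemma hammingVolume_pos (q n r : ℕ) : 0 < hammingVolume q n r :=
  single_le_sum (f := fun i => n.choose i * (q - 1) ^ i) (fun _ _ => Nat.zero_le _)
    (mem_range.mpr r.succ_pos) |>.trans_eq' (by simp)

lemma hammingVolume_mono {q n n' : ℕ} (r : ℕ) (h : n ≤ n') :
    hammingVolume q n r ≤ hammingVolume q n' r := by
  unfold hammingVolume
  gcongr

lemma factorial_mul_hammingVolume_le {q N Q : ℕ} (s : ℕ) (hq : 2 ≤ q) (hNQ : N ≤ Q)
    (hQ : 1 ≤ Q) :
    s ! * hammingVolume q N s ≤ (Q ^ s + s * s ! * Q ^ (s - 1)) * (q - 1) ^ s := by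
  have htop : s ! * N.choose s ≤ Q ^ s := by
    rw [← Nat.descFactorial_eq_factorial_mul_choose]
    exact (Nat.descFactorial_le_pow N s).trans (Nat.pow_le_pow_left hNQ s)
  have hlow (i : ℕ) (hi : i < s) : N.choose i * (q - 1) ^ i ≤ Q ^ (s - 1) * (q - 1) ^ s := by
    refine Nat.mul_le_mul ?_ (Nat.pow_le_pow_right (by omega) hi.le)
    exact (N.choose_le_pow i).trans <| (Nat.pow_le_pow_left hNQ i).trans <|
      Nat.pow_le_pow_right hQ (by omega)
  calc s ! * hammingVolume q N s
      = s ! * ∑ i ∈ range s, N.choose i * (q - 1) ^ i + s ! * N.choose s * (q - 1) ^ s := by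
        rw [hammingVolume, sum_range_succ, mul_add, mul_assoc]
    _ ≤ s ! * (s * (Q ^ (s - 1) * (q - 1) ^ s)) + Q ^ s * (q - 1) ^ s := by
        gcongr
        exact (sum_le_sum fun i hi => hlow i (mem_range.mp hi)).trans_eq (by simp)
    _ = (Q ^ s + s * s ! * Q ^ (s - 1)) * (q - 1) ^ s := by ring

lemma card_piFinset_support_eq {ι β : Type*} [Fintype ι] [DecidableEq ι] [Fintype β]
    [DecidableEq β] [Zero β] (S : Finset ι) :
    #(Fintype.piFinset fun i => if i ∈ S then univ.erase (0 : β) else {0}) =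
      (Fintype.card β - 1) ^ #S := by
  simp only [Fintype.card_piFinset, apply_ite card, card_erase_of_mem (mem_univ _), card_univ,
    card_singleton]
  rw [prod_ite_mem, univ_inter, prod_const]

lemma card_filter_hammingNorm_le {ι β : Type*} [Fintype ι] [DecidableEq ι] [Fintype β]
    [DecidableEq β] [Zero β] (r : ℕ) :
    #{c : ι → β | hammingNorm c ≤ r} ≤ hammingVolume (Fintype.card β) (Fintype.card ι) r := by
  have hcover : ({c : ι → β | hammingNorm c ≤ r} : Finset _) ⊆
      (range (r + 1)).biUnion fun k => (powersetCard k univ).biUnion fun S =>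
        Fintype.piFinset fun i => if i ∈ S then univ.erase (0 : β) else {0} := by
    intro c hc
    simp only [mem_filter, mem_univ, true_and] at hc
    simp only [mem_biUnion, mem_range, mem_powersetCard, Fintype.mem_piFinset]
    refine ⟨_, Nat.lt_succ_of_le hc, ({i | c i ≠ 0} : Finset ι), ⟨subset_univ _, rfl⟩,
      fun i => ?_⟩
    by_cases h : c i = 0 <;> simp [h]
  refine (card_le_card hcover).trans <| card_biUnion_le.trans <| sum_le_sum fun k _ => ?_
  refine card_biUnion_le.trans ?_
  rw [sum_congr rfl fun S hS => by rw [card_piFinset_support_eq, (mem_powersetCard.mp hS).2],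
    sum_const, card_powersetCard, card_univ, smul_eq_mul]

lemma hammingNorm_cons {β : Type*} [Zero β] [DecidableEq β] {n : ℕ} (c : Fin (n + 1) → β) :
    hammingNorm c = hammingNorm (Fin.tail c) + if c 0 = 0 then 0 else 1 := by
  simp only [hammingNorm, Fin.card_filter_univ_succ', Fin.tail]
  split_ifs <;> simp_all [add_comm] <;> congr

def IndepUpTo (F : Type*) {ι V : Type*} [Field F] [DecidableEq F] [Fintype ι] [AddCommGroup V]
    [Module F V] (r : ℕ) (v : ι → V) : Prop :=
  ∀ c : ι → F, c ≠ 0 → hammingNorm c ≤ r → ∑ i, c i • v i ≠ 0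

section Varshamov

variable {F V : Type*} [Field F] [DecidableEq F] [AddCommGroup V] [Module F V]

lemma IndepUpTo.le_hammingDist {n s : ℕ} {v : Fin n → V} (hv : IndepUpTo F (s + 1) v)
    {x y : Fin n → F} (hxy : x ≠ y) (h : ∑ i, x i • v i = ∑ i, y i • v i) :
    s + 2 ≤ hammingDist x y := by
  by_contra! hlt
  rw [hammingDist_eq_hammingNorm] at hlt
  refine hv (-x + y) (fun h0 => hxy (neg_add_eq_zero.mp h0)) (by omega) ?_
  simp [add_smul, sum_add_distrib, h]

variable [Fintype F] [Fintype V]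

lemma IndepUpTo.exists_cons {n s : ℕ} {v : Fin n → V} (hv : IndepUpTo F (s + 1) v)
    (hvol : hammingVolume (Fintype.card F) n s < Fintype.card V) :
    ∃ x : V, IndepUpTo F (s + 1) (Fin.cons x v) := by
  classical
  set spans : Finset V := image (fun c => ∑ i, c i • v i) {c : Fin n → F | hammingNorm c ≤ s}
  have hspans : #spans < Fintype.card V :=
    card_image_le.trans_lt <| (card_filter_hammingNorm_le s).trans_lt (by simpa using hvol)
  obtain ⟨x, -, hx⟩ := exists_mem_notMem_of_card_lt_card (t := univ) (by simpa using hspans)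
  refine ⟨x, fun c hc hnorm hsum => ?_⟩
  rw [Fin.sum_univ_succ] at hsum
  simp only [Fin.cons_zero, Fin.cons_succ] at hsum
  rw [hammingNorm_cons] at hnorm
  by_cases h0 : c 0 = 0
  · refine hv (Fin.tail c) (fun ht => hc ?_) (by simpa [h0] using hnorm)
      (by simpa [h0, Fin.tail] using hsum)
    ext i
    cases i using Fin.cases with
    | zero => exact h0
    | succ i => exact congrFun ht i
  · refine hx (mem_image.mpr ⟨-(c 0)⁻¹ • Fin.tail c, ?_, ?_⟩)
    · simp only [h0, if_false] at hnorm
      simpa using (hammingNorm_smul_le_hammingNorm (k := -(c 0)⁻¹) (x := Fin.tail c)).trans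
        (by omega)
    · simp only [Pi.smul_apply, smul_eq_mul, ← smul_smul, ← smul_sum, Fin.tail]
      rw [eq_neg_of_add_eq_zero_right hsum, smul_neg, neg_smul, neg_neg, inv_smul_smul₀ h0]

lemma exists_indepUpTo {n s : ℕ}
    (hvol : hammingVolume (Fintype.card F) (n - 1) s < Fintype.card V) :
    ∃ v : Fin n → V, IndepUpTo F (s + 1) v := by
  induction n with
  | zero => exact ⟨Fin.elim0, fun c hc _ _ => hc (Subsingleton.elim c 0)⟩
  | succ n ih =>
    obtain ⟨v, hv⟩ := ih ((hammingVolume_mono s (Nat.sub_le n 1)).trans_lt hvol)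
    exact ⟨_, (hv.exists_cons hvol).choose_spec⟩

lemma IndepUpTo.pow_le_card_mul_maxCode {n s t : ℕ} (ht : t ≤ Fintype.card F) {v : Fin n → V}
    (hv : IndepUpTo F (s + 1) v) : t ^ n ≤ Fintype.card V * maxCode t n (s + 2) := by
  classical
  set q := Fintype.card F
  set syndrome : (Fin n → F) → V := fun x => ∑ i, x i • v i
  have hfiber (w : V) : #{x | syndrome x = w} * t ^ n ≤ q ^ n * maxCode t n (s + 2) := by
    simpa using card_mul_pow_le_pow_mul_maxCode ht _ fun x hx y hy hxy =>
      hv.le_hammingDist hxy ((mem_filter.mp hx).2.trans (mem_filter.mp hy).2.symm)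
  have hsum : q ^ n * t ^ n ≤ Fintype.card V * (q ^ n * maxCode t n (s + 2)) :=
    calc q ^ n * t ^ n = ∑ w : V, #{x | syndrome x = w} * t ^ n := by
          rw [← sum_mul, ← card_eq_sum_card_fiberwise (f := syndrome) (s := univ) (t := univ)
            fun _ _ => mem_univ _]
          simp [q]
      _ ≤ _ := (sum_le_sum fun w _ => hfiber w).trans_eq (by simp)
  rw [mul_left_comm] at hsum
  exact Nat.le_of_mul_le_mul_left hsum (pow_pos Fintype.card_pos n)

end Varshamov

theorem pow_le_mul_hammingVolume_mul_maxCode {F : Type*} [Field F] [Fintype F] [DecidableEq F]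
    {t : ℕ} (ht : t ≤ Fintype.card F) (n s : ℕ) :
    t ^ n ≤ Fintype.card F * hammingVolume (Fintype.card F) (n - 1) s * maxCode t n (s + 2) := by
  set q := Fintype.card F
  set vol := hammingVolume q (n - 1) s
  have hq : 1 < q := Fintype.one_lt_card
  set m := Nat.log q vol + 1
  obtain ⟨v, hv⟩ := exists_indepUpTo (V := Fin m → F) (n := n) (s := s)
    (by simpa [q] using Nat.lt_pow_succ_log_self hq vol)
  calc t ^ n ≤ q ^ m * maxCode t n (s + 2) := by simpa using hv.pow_le_card_mul_maxCode ht
    _ ≤ q * vol * maxCode t n (s + 2) := by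
      gcongr
      rw [pow_succ']
      exact Nat.mul_le_mul_left q (Nat.pow_log_le_self q (hammingVolume_pos q (n - 1) s).ne')

lemma factorial_mul_pow_le_mul_maxCode {t n Q : ℕ} (s : ℕ) (ht : 2 ≤ t) (hn : 1 ≤ n)
    (hnQ : n ≤ Q) :
    s ! * t ^ (n - 1) ≤
      2 ^ (s + 1) * (t - 1) ^ s * (Q ^ s + s * s ! * Q ^ (s - 1)) * maxCode t n (s + 2) := by
  obtain ⟨p, hp, htp, hp2t⟩ := Nat.exists_prime_lt_and_le_two_mul t (by omega)
  have hp2t' : p ≠ 2 * t := fun h => Nat.not_prime_mul (by omega) (by omega) (h ▸ hp)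
  have := Fact.mk hp
  set W := Q ^ s + s * s ! * Q ^ (s - 1)
  set M := maxCode t n (s + 2)
  have hvarshamov := pow_le_mul_hammingVolume_mul_maxCode (F := ZMod p) (t := t)
    (by rw [ZMod.card]; exact htp.le) n s
  rw [ZMod.card] at hvarshamov
  have hvol := factorial_mul_hammingVolume_le s (by omega : 2 ≤ p) (by omega : n - 1 ≤ Q)
    (by omega)
  have hpow : t ^ n = t * t ^ (n - 1) := by rw [← pow_succ']; congr 1; omega
  refine Nat.le_of_mul_le_mul_left (c := t) ?_ (by omega)
  calc t * (s ! * t ^ (n - 1)) = s ! * t ^ n := by rw [hpow]; ring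
    _ ≤ p * (s ! * hammingVolume p (n - 1) s) * M :=
      (Nat.mul_le_mul_left _ hvarshamov).trans_eq (by ring)
    _ ≤ (2 * t) * (W * (p - 1) ^ s) * M := Nat.mul_le_mul_right M (Nat.mul_le_mul hp2t hvol)
    _ ≤ (2 * t) * (W * (2 * (t - 1)) ^ s) * M := by gcongr; omega
    _ = t * (2 ^ (s + 1) * (t - 1) ^ s * W * M) := by ring

lemma exists_forall_mul_add_lt_pow {c : ℝ} (hc : c < 1) (K : ℝ) {s : ℕ} (hs : 1 ≤ s) :
    ∃ Q₀ : ℕ, ∀ Q : ℕ, Q₀ ≤ Q → c * ((Q : ℝ) ^ s + K * (Q : ℝ) ^ (s - 1)) < (Q : ℝ) ^ s := by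
  obtain ⟨Q₀, hQ₀⟩ := exists_nat_gt (c * K / (1 - c))
  refine ⟨Q₀ + 1, fun Q hQ => ?_⟩
  have hQpos : (0 : ℝ) < Q := by exact_mod_cast (by omega : 0 < Q)
  have hcQ : c * (Q + K) < Q := by
    have := (div_lt_iff₀ (by linarith : 0 < 1 - c)).mp
      (hQ₀.trans_le (Nat.cast_le.mpr (by omega : Q₀ ≤ Q)))
    linarith
  have hQs : (Q : ℝ) ^ s = (Q : ℝ) ^ (s - 1) * Q := by rw [← pow_succ]; congr 1; omega
  rw [hQs]
  nlinarith [pow_pos hQpos (s - 1)]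

lemma exists_forall_lt_maxCode {t s : ℕ} (ht : 2 ≤ t) (hs : 1 ≤ s) {c : ℝ} (hc0 : 0 < c)
    (hc1 : c < 1) :
    ∃ Q₀ : ℕ, ∀ Q n : ℕ, Q₀ ≤ Q → 1 ≤ n → n ≤ Q →
      c * (s ! : ℝ) / (2 ^ (s + 1) * ((t : ℝ) - 1) ^ s) * (t : ℝ) ^ (n - 1) / (Q : ℝ) ^ s
        < maxCode t n (s + 2) := by
  obtain ⟨Q₀, hQ₀⟩ := exists_forall_mul_add_lt_pow hc1 (s * s ! : ℝ) hs
  refine ⟨Q₀, fun Q n hQ hn hnQ => ?_⟩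
  have hbound := Nat.cast_le (α := ℝ) |>.mpr (factorial_mul_pow_le_mul_maxCode s ht hn hnQ)
  push_cast [Nat.cast_sub (by omega : 1 ≤ t)] at hbound
  set W : ℝ := (Q : ℝ) ^ s + s * s ! * (Q : ℝ) ^ (s - 1)
  set D : ℝ := 2 ^ (s + 1) * ((t : ℝ) - 1) ^ s
  set M : ℝ := (maxCode t n (s + 2) : ℝ)
  have hD : 0 < D := by
    have := sub_pos.mpr (show (1 : ℝ) < t by exact_mod_cast ht)
    positivity
  have hM : 0 < M :=
    pos_of_mul_pos_right ((by positivity : (0 : ℝ) < s ! * (t : ℝ) ^ (n - 1)).trans_le hbound)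
      (mul_nonneg hD.le (by positivity))
  have hQpos : (0 : ℝ) < Q := by exact_mod_cast (by omega : 0 < Q)
  rw [div_mul_eq_mul_div, div_div, div_lt_iff₀ (by positivity)]
  calc c * s ! * (t : ℝ) ^ (n - 1) ≤ c * (D * W * M) := by rw [mul_assoc]; gcongr
    _ = D * M * (c * W) := by ring
    _ < D * M * (Q : ℝ) ^ s := by gcongr; exact hQ₀ Q hQ
    _ = M * (D * (Q : ℝ) ^ s) := by ring

theorem asymp_varshamov_general (t k R : ℕ) (ht : 2 ≤ t) (c₉ : ℝ)
    (hc0 : 0 < c₉) (hc1 : c₉ < 1) :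
    ∃ Q₀ : ℕ, ∀ Q : ℕ, Q₀ ≤ Q →
      c₉ * (Nat.factorial (2 * R - 1) : ℝ)
          / (2 ^ (2 * R) * ((t : ℝ) - 1) ^ (2 * R - 1))
          * (t : ℝ) ^ (Q - (k ^ 2 + 3 * k - 2) / 2 - 1) / (Q : ℝ) ^ (2 * R - 1)
        < (maxCode t (Q - (k ^ 2 + 3 * k - 2) / 2) (2 * R + 1) : ℝ) := by
  set ck := (k ^ 2 + 3 * k - 2) / 2
  rcases Nat.eq_zero_or_pos R with rfl | hR
  · refine ⟨0, fun Q _ => ?_⟩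
    have hpow : (t : ℝ) ^ (Q - ck - 1) ≤ maxCode t (Q - ck) 1 := by
      exact_mod_cast (Nat.pow_le_pow_right (by omega) (Nat.sub_le _ 1)).trans
        (pow_le_maxCode_one t _)
    have : (0 : ℝ) < (t : ℝ) ^ (Q - ck - 1) := by positivity
    simp only [mul_zero, Nat.zero_sub, Nat.factorial_zero, Nat.cast_one, pow_zero, mul_one,
      div_one, zero_add]
    nlinarith
  · obtain ⟨Q₀, hQ₀⟩ := exists_forall_lt_maxCode (s := 2 * R - 1) ht (by omega) hc0 hc1
    refine ⟨Q₀ + ck + 1, fun Q hQ => ?_⟩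
    have h1 : 2 * R - 1 + 1 = 2 * R := by omega
    have h2 : 2 * R - 1 + 2 = 2 * R + 1 := by omega
    simpa only [h1, h2] using hQ₀ Q (Q - ck) (by omega) (by omega) (by omega)

/-- with `c_k = (k²+3k-2)/2` and `0 < c₉ < 1`, for `Q` large enough,
`A_t(Q - c_k, 2R+1) > c₉ (2R-1)!/(2^{2R}(t-1)^{2R-1}) · t^{Q-c_k-1}/Q^{2R-1}`. -/
theorem asymp_varshamov (t k R : ℕ) (ht : 2 ≤ t) (hR : R ≤ k) (c₉ : ℝ)
    (hc0 : 0 < c₉) (hc1 : c₉ < 1) :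
    ∃ Q₀ : ℕ, ∀ Q : ℕ, Q₀ ≤ Q →
      c₉ * (Nat.factorial (2 * R - 1) : ℝ)
          / (2 ^ (2 * R) * ((t : ℝ) - 1) ^ (2 * R - 1))
          * (t : ℝ) ^ (Q - (k ^ 2 + 3 * k - 2) / 2 - 1) / (Q : ℝ) ^ (2 * R - 1)
        < (maxCode t (Q - (k ^ 2 + 3 * k - 2) / 2) (2 * R + 1) : ℝ) :=
  asymp_varshamov_general t k R ht c₉ hc0 hc1
end

section
/- Let w ∈ T^Q be a string in which every letter of T occurs at most F times, and let u be a lie string of length j. Then the number of strings w' with w →^u w' is at most C(M+j-1, j)·F^j when w is divided into M contiguous sections and each letter occurs at most F times per section. More precisely: if each letter of T occurs at most F times in each of the M sections of w, then |{w' : w →^u w'}| ≤ C(M+j-1,j) · F^j. -/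
/-- `Applies u w w'` : the lie string `u = (a₁,b₁)⋯(a_j,b_j)` can be applied to `w`
to obtain `w'`; that is, there are positions `i₁ < ⋯ < i_j` with `w` carrying letter
`a_ℓ` and `w'` carrying letter `b_ℓ` at position `i_ℓ`, and `w`, `w'` agree elsewhere. -/
def Applies {t Q : ℕ} (u : List (Fin t × Fin t)) (w w' : Fin Q → Fin t) : Prop :=
  ∃ pos : Fin u.length → Fin Q, StrictMono pos ∧
    (∀ ℓ : Fin u.length, w (pos ℓ) = (u.get ℓ).1 ∧ w' (pos ℓ) = (u.get ℓ).2) ∧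
    (∀ p : Fin Q, (∀ ℓ, pos ℓ ≠ p) → w p = w' p)

/-!
A witness `pos` of `w →ᵘ w'` determines `w'`, and it is a monotone sequence of positions
with `w ∘ pos` prescribed by `u`. Since sections are contiguous, `pos` visits a monotone
sequence of sections, i.e. a multiset of `j` sections out of `M`: `C(M+j-1, j)` choices by
stars and bars. Once that sequence is fixed, each `pos ℓ` is one of the at most `F`
positions of its section carrying the letter `(u.get ℓ).1`.
-/

open Finset

lemma sectionOf_monotone (Q M : ℕ) : Monotone (sectionOf Q M) := by
  intro p p' h
  unfold sectionOf
  split_ifs with hp hp'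
  · exact Nat.div_le_div_right h
  · exact (Nat.div_lt_of_lt_mul (by rwa [Nat.mul_comm] at hp)).le.trans (Nat.le_add_right _ _)
  · omega
  · exact Nat.add_le_add_left (Nat.div_le_div_right (Nat.sub_le_sub_right h _)) _

lemma sectionOf_lt {Q M p : ℕ} (hM : 0 < M) (hp : p < Q) : sectionOf Q M p < M := by
  have hr : Q % M < M := Nat.mod_lt Q hM
  have hQ : Q = Q / M * (M - Q % M) + Q % M * (Q / M + 1) := by
    have h := Nat.div_add_mod Q M
    zify [hr.le] at h ⊢
    linear_combination -h
  unfold sectionOf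
  generalize Q / M = q at *
  generalize Q % M = r at *
  split_ifs with h
  · exact (Nat.div_lt_of_lt_mul (by rwa [Nat.mul_comm] at h)).trans hr
  · have hq : 0 < q := Nat.pos_of_ne_zero fun h0 => by subst h0; omega
    have : (p - r * (q + 1)) / q < M - r := Nat.div_lt_of_lt_mul (by omega)
    omega

theorem ncard_monotone_le {β : Type*} [LinearOrder β] [Fintype β] (n : ℕ) :
    {f : Fin n → β | Monotone f}.ncard ≤ (Fintype.card β + n - 1).choose n := by
  classical
  rw [← Sym.card_sym_eq_choose, ← Nat.card_eq_fintype_card, ← Nat.card_coe_set_eq]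
  refine Nat.card_le_card_of_injective
    (fun f => ⟨(List.ofFn f.1 : Multiset β), by simp⟩) ?_
  rintro ⟨f, hf⟩ ⟨g, hg⟩ hfg
  have hperm : (List.ofFn f).Perm (List.ofFn g) :=
    Multiset.coe_eq_coe.mp (congrArg Subtype.val hfg)
  exact Subtype.ext (List.ofFn_injective (hperm.eq_of_sortedLE hf.sortedLE_ofFn hg.sortedLE_ofFn))

theorem ncard_monotone_colored_le {α β γ : Type*} [LinearOrder α] [Fintype α]
    [LinearOrder β] [Fintype β] (s : α → β) (hs : Monotone s) (c : α → γ) (F : ℕ)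
    (hF : ∀ b g, {x | s x = b ∧ c x = g}.ncard ≤ F) {n : ℕ} (a : Fin n → γ) :
    {pos : Fin n → α | Monotone pos ∧ ∀ ℓ, c (pos ℓ) = a ℓ}.ncard
      ≤ (Fintype.card β + n - 1).choose n * F ^ n := by
  classical
  set P : Finset (Fin n → α) := {pos | Monotone pos ∧ ∀ ℓ, c (pos ℓ) = a ℓ}
  have hfiber : ∀ σ : Fin n → β, #{pos ∈ P | s ∘ pos = σ} ≤ F ^ n := by
    intro σ
    calc #{pos ∈ P | s ∘ pos = σ}
        ≤ #(Fintype.piFinset fun ℓ => ({x | s x = σ ℓ ∧ c x = a ℓ} : Finset α)) := by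
          refine card_le_card fun pos hpos => ?_
          simp only [P, mem_filter, mem_univ, true_and] at hpos
          simp only [Fintype.mem_piFinset, mem_filter, mem_univ, true_and]
          exact fun ℓ => ⟨congrFun hpos.2 ℓ, hpos.1.2 ℓ⟩
      _ ≤ F ^ #(univ : Finset (Fin n)) := by
          rw [Fintype.card_piFinset]
          refine prod_le_pow_card _ _ _ fun ℓ _ => ?_
          simpa [Set.ncard_eq_toFinset_card'] using hF (σ ℓ) (a ℓ)
      _ = F ^ n := by simp
  have himage : #(P.image (s ∘ ·)) ≤ (Fintype.card β + n - 1).choose n := by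
    refine le_trans ?_ (ncard_monotone_le n)
    rw [← Set.ncard_coe_finset]
    refine Set.ncard_le_ncard (fun σ hσ => ?_)
    obtain ⟨pos, hpos, rfl⟩ := mem_image.mp hσ
    exact hs.comp (mem_filter.mp hpos).2.1
  calc {pos : Fin n → α | Monotone pos ∧ ∀ ℓ, c (pos ℓ) = a ℓ}.ncard = #P := by
        rw [← Set.ncard_coe_finset]; simp [P]
    _ ≤ F ^ n * #(P.image (s ∘ ·)) := card_le_mul_card_image _ _ fun σ _ => hfiber σ
    _ ≤ _ := by rw [mul_comm]; exact Nat.mul_le_mul_right _ himage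

lemma ncard_setOf_applies_le {t Q : ℕ} (u : List (Fin t × Fin t)) (w : Fin Q → Fin t) :
    {w' | Applies u w w'}.ncard
      ≤ {pos : Fin u.length → Fin Q | Monotone pos ∧ ∀ ℓ, w (pos ℓ) = (u.get ℓ).1}.ncard := by
  have determined : ∀ {w₁ w₂ : Fin Q → Fin t} (pos : Fin u.length → Fin Q),
      (∀ ℓ, w₁ (pos ℓ) = (u.get ℓ).2) → (∀ p, (∀ ℓ, pos ℓ ≠ p) → w p = w₁ p) →
      (∀ ℓ, w₂ (pos ℓ) = (u.get ℓ).2) → (∀ p, (∀ ℓ, pos ℓ ≠ p) → w p = w₂ p) → w₁ = w₂ := by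
    intro w₁ w₂ pos h₁ h₁' h₂ h₂'
    funext p
    by_cases hp : ∃ ℓ, pos ℓ = p
    · obtain ⟨ℓ, rfl⟩ := hp
      rw [h₁, h₂]
    · simp only [not_exists] at hp
      rw [← h₁' p hp, ← h₂' p hp]
  rw [← Nat.card_coe_set_eq, ← Nat.card_coe_set_eq]
  refine Nat.card_le_card_of_injective (fun x => ⟨x.2.choose,
    x.2.choose_spec.1.monotone, fun ℓ => (x.2.choose_spec.2.1 ℓ).1⟩) ?_
  rintro ⟨w₁, h₁⟩ ⟨w₂, h₂⟩ h
  have hpos : h₁.choose = h₂.choose := congrArg Subtype.val h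
  refine Subtype.ext (determined h₁.choose (fun ℓ => (h₁.choose_spec.2.1 ℓ).2)
    h₁.choose_spec.2.2 ?_ ?_)
  · exact hpos ▸ fun ℓ => (h₂.choose_spec.2.1 ℓ).2
  · exact hpos ▸ h₂.choose_spec.2.2

theorem shadow_upper_sections_general (t Q M F j : ℕ) (hM : 0 < M)
    (w : Fin Q → Fin t)
    (hw : ∀ m < M, ∀ a : Fin t,
      Set.ncard {p : Fin Q | sectionOf Q M p = m ∧ w p = a} ≤ F)
    (u : List (Fin t × Fin t)) (hj : u.length = j) :
    Set.ncard {w' : Fin Q → Fin t | Applies u w w'}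
      ≤ Nat.choose (M + j - 1) j * F ^ j := by
  subst hj
  let s : Fin Q → Fin M := fun p => ⟨sectionOf Q M p, sectionOf_lt hM p.isLt⟩
  have hs : Monotone s := fun p q hpq => sectionOf_monotone Q M hpq
  have hF : ∀ m a, {p | s p = m ∧ w p = a}.ncard ≤ F := fun m a => by
    simpa only [s, Fin.ext_iff] using hw m m.isLt a
  calc {w' | Applies u w w'}.ncard
      ≤ {pos : Fin u.length → Fin Q | Monotone pos ∧ ∀ ℓ, w (pos ℓ) = (u.get ℓ).1}.ncard :=
        ncard_setOf_applies_le u w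
    _ ≤ (M + u.length - 1).choose u.length * F ^ u.length := by
        simpa using ncard_monotone_colored_le s hs w F hF fun ℓ => (u.get ℓ).1

/-- if each letter occurs at most `F` times in each of the `M` sections
of `w`, and `u` is a lie string of length `j`, then
`|{w' : w →ᵘ w'}| ≤ C(M+j-1,j)·F^j`. -/
theorem shadow_upper_sections (t Q M F j : ℕ) (ht : 2 ≤ t) (hM : 0 < M)
    (w : Fin Q → Fin t)
    (hw : ∀ m < M, ∀ a : Fin t,
      Set.ncard {p : Fin Q | sectionOf Q M p = m ∧ w p = a} ≤ F)
    (u : List (Fin t × Fin t)) (hlie : ∀ p ∈ u, p.1 ≠ p.2) (hj : u.length = j) :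
    Set.ncard {w' : Fin Q → Fin t | Applies u w w'}
      ≤ Nat.choose (M + j - 1) j * F ^ j :=
  shadow_upper_sections_general t Q M F j hM w hw u hj
end
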